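/- (Céa's lemma) With a bounded (constant C) and coercive (constant α) bilinear form a on a Hilbert space V, and u_h the Galerkin approximation of u in a closed subspace V_h, one has ‖u − u_h‖_V ≤ (C/α) inf_{v_h ∈ V_h} ‖u − v_h‖_V. -/
import Mathlib


/-- Céa's lemma: `‖u − u_h‖ ≤ (C/α) · inf_{v_h ∈ V_h} ‖u − v_h‖`. -/
theorem stmt_3
    {V : Type*} [NormedAddCommGroup V] [InnerProductSpace ℝ V] [CompleteSpace V]
    (a : V →ₗ[ℝ] V →ₗ[ℝ] ℝ) (C α : ℝ) (hα : 0 < α)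
    (hbound : ∀ u v : V, |a u v| ≤ C * ‖u‖ * ‖v‖)
    (hcoercive : ∀ v : V, α * ‖v‖ ^ 2 ≤ a v v)
    (F : V →L[ℝ] ℝ)
    (Vh : Submodule ℝ V) (hVh : IsClosed (Vh : Set V))
    (u uh : V) (huh : uh ∈ Vh)
    (hu : ∀ v : V, a u v = F v)
    (hgal : ∀ vh ∈ Vh, a uh vh = F vh) :
    ‖u - uh‖ ≤ (C / α) * ⨅ vh : Vh, ‖u - (vh : V)‖ := by
  haveI : Nonempty Vh := ⟨⟨0, Vh.zero_mem⟩⟩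
  by_cases hV : ∀ x : V, x = 0
  · have h1 : u - uh = 0 := hV _
    have h2 : (⨅ vh : Vh, ‖u - (vh : V)‖) = 0 := by
      have : ∀ vh : Vh, ‖u - (vh : V)‖ = 0 := fun vh => by rw [hV (u - vh), norm_zero]
      simp only [this, ciInf_const]
    rw [h2, h1, norm_zero, mul_zero]
  · push_neg at hV
    obtain ⟨x, hx⟩ := hV
    have hxn : 0 < ‖x‖ := norm_pos_iff.mpr hx
    have hC : α ≤ C := by
      have h := (hcoercive x).trans ((le_abs_self _).trans (hbound x x))
      have : α * ‖x‖ ^ 2 ≤ C * ‖x‖ ^ 2 := by nlinarith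
      exact le_of_mul_le_mul_right (by simpa [mul_comm] using this) (by positivity)
    have hCpos : 0 < C := lt_of_lt_of_le hα hC
    have horth : ∀ w ∈ Vh, a (u - uh) w = 0 := by
      intro w hw
      simp [map_sub, LinearMap.sub_apply, hu w, hgal w hw]
    have key : ∀ vh : Vh, α * ‖u - uh‖ ^ 2 ≤ C * ‖u - uh‖ * ‖u - (vh : V)‖ := by
      intro vh
      have heq : a (u - uh) (u - (vh : V)) = a (u - uh) (u - uh) := by
        have h0 : a (u - uh) (uh - (vh : V)) = 0 :=
          horth _ (Vh.sub_mem huh vh.2)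
        have : (u : V) - (vh : V) = (u - uh) + (uh - (vh : V)) := by abel
        rw [this, map_add, h0, add_zero]
      calc α * ‖u - uh‖ ^ 2 ≤ a (u - uh) (u - uh) := hcoercive _
        _ = a (u - uh) (u - (vh : V)) := heq.symm
        _ ≤ |a (u - uh) (u - (vh : V))| := le_abs_self _
        _ ≤ C * ‖u - uh‖ * ‖u - (vh : V)‖ := hbound _ _
    rcases eq_or_lt_of_le (norm_nonneg (u - uh)) with h0 | h0
    · rw [← h0]
      have hI : 0 ≤ ⨅ vh : Vh, ‖u - (vh : V)‖ :=
        Real.iInf_nonneg fun vh => norm_nonneg _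
      positivity
    · have hCα : 0 < C / α := div_pos hCpos hα
      rw [mul_comm, ← div_le_iff₀ hCα]
      apply le_ciInf
      intro vh
      rw [div_le_iff₀ hCα]
      have h2 : α * ‖u - uh‖ ≤ C * ‖u - (vh : V)‖ := by nlinarith [key vh]
      calc ‖u - uh‖ = (α * ‖u - uh‖) / α := by field_simp
        _ ≤ (C * ‖u - (vh : V)‖) / α := by gcongr
        _ = ‖u - (vh : V)‖ * (C / α) := by ring
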